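/- In A₀, the elements R(s) pairwise commute: R(s)·R(t) = R(t)·R(s) for all s, t ≥ 1. -/
import Mathlib


open FreeAlgebra

noncomputable section

/-- Defining relations for the specialisation at `q = 0` of the generic composition
algebra of the Kronecker quiver, on generators `i = ι ℚ 0` and `j = ι ℚ 1`:
(1) `i^m j^(m+1) i^(m+1) j^(m+2) = i^(2m+1) j^(2m+3)` for all `m ≥ 0`;
(2) `i^(n+2) j^(n+1) i^(n+1) j^n = i^(2n+3) j^(2n+1)` for all `n ≥ 0`;
(3) `(i^m j^m)(i^n j^n) = (i^n j^n)(i^m j^m)` for all `m, n ≥ 1`. -/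
inductive KroneckerRel0 : FreeAlgebra ℚ (Fin 2) → FreeAlgebra ℚ (Fin 2) → Prop
  | preproj (m : ℕ) :
      KroneckerRel0
        (ι ℚ 0 ^ m * ι ℚ 1 ^ (m + 1) * (ι ℚ 0 ^ (m + 1) * ι ℚ 1 ^ (m + 2)))
        (ι ℚ 0 ^ (2 * m + 1) * ι ℚ 1 ^ (2 * m + 3))
  | preinj (n : ℕ) :
      KroneckerRel0
        (ι ℚ 0 ^ (n + 2) * ι ℚ 1 ^ (n + 1) * (ι ℚ 0 ^ (n + 1) * ι ℚ 1 ^ n))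
        (ι ℚ 0 ^ (2 * n + 3) * ι ℚ 1 ^ (2 * n + 1))
  | deltaComm (m n : ℕ) (hm : 1 ≤ m) (hn : 1 ≤ n) :
      KroneckerRel0
        (ι ℚ 0 ^ m * ι ℚ 1 ^ m * (ι ℚ 0 ^ n * ι ℚ 1 ^ n))
        (ι ℚ 0 ^ n * ι ℚ 1 ^ n * (ι ℚ 0 ^ m * ι ℚ 1 ^ m))

/-- `A₀`, the composition algebra of the Kronecker quiver specialised at `q = 0`,
presented by generators `i, j` and the relations above. -/
abbrev A0 : Type := RingQuot KroneckerRel0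

/-- The generator `i` of `A₀`. -/
def iA : A0 := RingQuot.mkAlgHom ℚ KroneckerRel0 (ι ℚ 0)

/-- The generator `j` of `A₀`. -/
def jA : A0 := RingQuot.mkAlgHom ℚ KroneckerRel0 (ι ℚ 1)

/-- The commutator `ij - ji` in `A₀`. -/
def cA : A0 := iA * jA - jA * iA

/-- `P(m) = (ij - ji)^m j` in `A₀`. -/
def PA (m : ℕ) : A0 := cA ^ m * jA

/-- `I(n) = i (ij - ji)^n` in `A₀`. -/
def IA (n : ℕ) : A0 := iA * cA ^ n

/-- `R(1) = ij - ji` and `R(s+1) = i (ij - ji)^s j` for `s ≥ 1` in `A₀`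
(the value at `0` is junk). -/
def RA : ℕ → A0
  | 0 => 0
  | 1 => cA
  | (s + 2) => iA * cA ^ (s + 1) * jA

/-- `δ_m = i^m j^m` in `A₀`. -/
def deltaA (m : ℕ) : A0 := iA ^ m * jA ^ m

namespace KronAux

/-- `a = ij`. -/
def aA : A0 := iA * jA

/-- `b = ji`. -/
def bA : A0 := jA * iA

/-- `u_k = δ_(k+1) - a^(k+1)`. -/
def uA (k : ℕ) : A0 := deltaA (k + 1) - aA ^ (k + 1)

lemma c_eq : cA = aA - bA := rfl

lemma b_eq : bA = aA - cA := by rw [c_eq]; abel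

lemma delta_one : deltaA 1 = aA := by simp [deltaA, aA]

lemma delta_succ (m : ℕ) : deltaA (m + 1) = iA * deltaA m * jA := by
  calc deltaA (m + 1) = (iA * iA ^ m) * (jA ^ m * jA) := by rw [deltaA, pow_succ', pow_succ]
    _ = iA * deltaA m * jA := by rw [deltaA]; simp only [mul_assoc]

lemma mk_eq {x y : FreeAlgebra ℚ (Fin 2)} (h : KroneckerRel0 x y) :
    RingQuot.mkAlgHom ℚ KroneckerRel0 x = RingQuot.mkAlgHom ℚ KroneckerRel0 y :=
  RingQuot.mkAlgHom_rel ℚ h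

/-- relation (3) in `A₀`. -/
lemma delta_comm (m n : ℕ) (hm : 1 ≤ m) (hn : 1 ≤ n) :
    deltaA m * deltaA n = deltaA n * deltaA m := by
  have h := mk_eq (KroneckerRel0.deltaComm m n hm hn)
  simpa only [map_mul, map_pow, deltaA, iA, jA, mul_assoc] using h

lemma delta_a_comm (m : ℕ) : deltaA m * aA = aA * deltaA m := by
  cases m with
  | zero => simp [deltaA]
  | succ m =>
      rw [← delta_one, delta_comm (m + 1) 1 (Nat.succ_le_succ (Nat.zero_le m)) le_rfl]

/-- relation (2) at `n = 0`, in the form `i² c = 0`. -/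
lemma i2c : iA * iA * cA = 0 := by
  have h := mk_eq (KroneckerRel0.preinj 0)
  simp only [map_mul, map_pow, Nat.mul_zero, Nat.zero_add, pow_one, pow_zero, mul_one] at h
  have h' : iA * iA * (jA * iA) = iA * iA * (iA * jA) := by
    have e1 : iA * iA * (jA * iA) = iA ^ 2 * jA * iA := by
      rw [pow_two]; simp only [mul_assoc]
    have e2 : iA * iA * (iA * jA) = iA ^ 3 * jA := by
      rw [pow_three]; simp only [mul_assoc]
    rw [e1, e2]
    exact h
  rw [cA, mul_sub, h', sub_self]

/-- relation (1) at `m = 0`, in the form `c j² = 0`. -/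
lemma cj2 : cA * (jA * jA) = 0 := by
  have h := mk_eq (KroneckerRel0.preproj 0)
  simp only [map_mul, map_pow, Nat.mul_zero, Nat.zero_add, pow_one, pow_zero, one_mul] at h
  have h' : jA * iA * (jA * jA) = iA * jA * (jA * jA) := by
    have e1 : jA * iA * (jA * jA) = jA * (iA * jA ^ 2) := by
      rw [pow_two]; simp only [mul_assoc]
    have e2 : iA * jA * (jA * jA) = iA * jA ^ 3 := by
      rw [pow_three]; simp only [mul_assoc]
    rw [e1, e2]
    exact h
  rw [cA, sub_mul, h', sub_self]

lemma a_i : aA * iA = iA * bA := by simp [aA, bA, mul_assoc]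

lemma j_a : jA * aA = bA * jA := by simp [aA, bA, mul_assoc]

/-- The core joint induction: `δ_(m+1) = i a^m j`, `i a^(m+1) = i δ_(m+1)`,
`a^(m+1) j = δ_(m+1) j`. -/
lemma core (m : ℕ) :
    deltaA (m + 1) = iA * (aA ^ m * jA) ∧
    iA * aA ^ (m + 1) = iA * deltaA (m + 1) ∧
    aA ^ (m + 1) * jA = deltaA (m + 1) * jA := by
  induction m with
  | zero =>
      refine ⟨by simp [delta_one, aA], by simp [delta_one], by simp [delta_one]⟩
  | succ m ih =>
      obtain ⟨h1, h2, h3⟩ := ih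
      have new1 : deltaA (m + 2) = iA * (aA ^ (m + 1) * jA) := by
        rw [delta_succ (m + 1), ← h2, mul_assoc]
      have new2 : iA * aA ^ (m + 2) = iA * deltaA (m + 2) := by
        calc iA * aA ^ (m + 2) = iA * aA ^ (m + 1) * aA := by rw [pow_succ, ← mul_assoc]
          _ = iA * deltaA (m + 1) * aA := by rw [h2]
          _ = iA * (deltaA (m + 1) * aA) := by rw [mul_assoc]
          _ = iA * (aA * deltaA (m + 1)) := by rw [delta_a_comm]
          _ = iA * (aA * (iA * (aA ^ m * jA))) := by rw [h1]
          _ = iA * (aA * iA) * (aA ^ m * jA) := by simp only [mul_assoc]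
          _ = iA * (iA * bA) * (aA ^ m * jA) := by rw [a_i]
          _ = iA * iA * (bA * (aA ^ m * jA)) := by simp only [mul_assoc]
          _ = iA * iA * ((aA - cA) * (aA ^ m * jA)) := by rw [← b_eq]
          _ = iA * iA * (aA * (aA ^ m * jA)) - iA * iA * (cA * (aA ^ m * jA)) := by
              rw [sub_mul, mul_sub]
          _ = iA * iA * (aA * (aA ^ m * jA)) := by
              rw [← mul_assoc (iA * iA) cA, i2c, zero_mul, sub_zero]
          _ = iA * (iA * (aA ^ (m + 1) * jA)) := by
              simp only [pow_succ']
              simp only [mul_assoc]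
          _ = iA * deltaA (m + 2) := by rw [← new1]
      have new3 : aA ^ (m + 2) * jA = deltaA (m + 2) * jA := by
        calc aA ^ (m + 2) * jA = aA * (aA ^ (m + 1) * jA) := by
              rw [pow_succ']; simp only [mul_assoc]
          _ = aA * (deltaA (m + 1) * jA) := by rw [h3]
          _ = aA * deltaA (m + 1) * jA := by rw [← mul_assoc]
          _ = deltaA (m + 1) * aA * jA := by rw [delta_a_comm]
          _ = iA * (aA ^ m * jA) * aA * jA := by rw [h1]
          _ = iA * aA ^ m * (jA * aA) * jA := by simp only [mul_assoc]
          _ = iA * aA ^ m * (bA * jA) * jA := by rw [j_a]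
          _ = iA * aA ^ m * (bA * (jA * jA)) := by simp only [mul_assoc]
          _ = iA * aA ^ m * ((aA - cA) * (jA * jA)) := by rw [← b_eq]
          _ = iA * aA ^ m * (aA * (jA * jA)) - iA * aA ^ m * (cA * (jA * jA)) := by
              rw [sub_mul, mul_sub]
          _ = iA * aA ^ m * (aA * (jA * jA)) := by rw [cj2, mul_zero, sub_zero]
          _ = iA * (aA ^ (m + 1) * jA) * jA := by
              simp only [pow_succ]
              simp only [mul_assoc]
          _ = deltaA (m + 2) * jA := by rw [← new1]
      exact ⟨new1, new2, new3⟩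

lemma c1 (m : ℕ) : deltaA (m + 1) = iA * (aA ^ m * jA) := (core m).1

lemma i_u (k : ℕ) : iA * uA k = 0 := by
  rw [uA, mul_sub, (core k).2.1, sub_self]

lemma u_j (k : ℕ) : uA k * jA = 0 := by
  rw [uA, sub_mul, (core k).2.2, sub_self]

lemma u_a_comm (k : ℕ) : uA k * aA = aA * uA k := by
  rw [uA, sub_mul, mul_sub, delta_a_comm, ← pow_succ, ← pow_succ']

lemma apow_a_comm (p : ℕ) : aA ^ p * aA = aA * aA ^ p := by
  rw [← pow_succ, ← pow_succ']

lemma u_apow_comm (k p : ℕ) : uA k * aA ^ p = aA ^ p * uA k := by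
  induction p with
  | zero => simp
  | succ p ih =>
      rw [pow_succ, ← mul_assoc, ih, mul_assoc, u_a_comm, ← mul_assoc]

lemma b_u (k : ℕ) : bA * uA k = 0 := by
  rw [bA, mul_assoc, i_u, mul_zero]

lemma u_b (k : ℕ) : uA k * bA = 0 := by
  rw [bA, ← mul_assoc, u_j, zero_mul]

lemma c_u (k : ℕ) : cA * uA k = aA * uA k := by
  rw [c_eq, sub_mul, b_u, sub_zero]

lemma u_c (k : ℕ) : uA k * cA = aA * uA k := by
  rw [c_eq, mul_sub, u_b, sub_zero, u_a_comm]

/-- The generators of the commutative subalgebra: `δ_(k+1)`. -/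
def dgens : Set A0 := Set.range fun k : ℕ => deltaA (k + 1)

/-- The commutative subalgebra generated by the `δ`'s. -/
def Dalg : Subalgebra ℚ A0 := Algebra.adjoin ℚ dgens

lemma delta_mem (k : ℕ) : deltaA (k + 1) ∈ Dalg :=
  Algebra.subset_adjoin ⟨k, rfl⟩

lemma a_mem : aA ∈ Dalg := delta_one ▸ delta_mem 0

lemma u_mem (k : ℕ) : uA k ∈ Dalg :=
  sub_mem (delta_mem k) (pow_mem a_mem (k + 1))

lemma gen_comm (k : ℕ) : ∀ y ∈ Dalg, deltaA (k + 1) * y = y * deltaA (k + 1) := by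
  intro y hy
  induction hy using Algebra.adjoin_induction with
  | mem x hx =>
      obtain ⟨l, rfl⟩ := hx
      exact delta_comm _ _ (Nat.succ_le_succ (Nat.zero_le _)) (Nat.succ_le_succ (Nat.zero_le _))
  | algebraMap r => exact (Algebra.commutes r _).symm
  | add x y hx hy ihx ihy => rw [mul_add, add_mul, ihx, ihy]
  | mul x y hx hy ihx ihy => rw [← mul_assoc, ihx, mul_assoc, ihy, ← mul_assoc]

lemma Dalg_comm : ∀ x ∈ Dalg, ∀ y ∈ Dalg, x * y = y * x := by
  intro x hx
  induction hx using Algebra.adjoin_induction with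
  | mem x hx =>
      obtain ⟨l, rfl⟩ := hx
      exact fun y hy => gen_comm l y hy
  | algebraMap r => exact fun y hy => Algebra.commutes r y
  | add x y hx hy ihx ihy =>
      intro z hz
      rw [add_mul, mul_add, ihx z hz, ihy z hz]
  | mul x y hx hy ihx ihy =>
      intro z hz
      rw [mul_assoc, ihy z hz, ← mul_assoc, ihx z hz, mul_assoc]

/-- The key "straightening" lemma: for `z` in the δ-subalgebra,
`u_k z c = a (u_k z)`. -/
lemma q_lemma : ∀ z ∈ Dalg, ∀ k : ℕ, uA k * z * cA = aA * (uA k * z) := by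
  have hmon : ∀ z ∈ Submonoid.closure dgens, ∀ k : ℕ, uA k * z * cA = aA * (uA k * z) := by
    intro z hz
    induction hz using Submonoid.closure_induction_left with
    | one => intro k; rw [mul_one, u_c]
    | mul_left x hx y hy ih =>
        obtain ⟨l, rfl⟩ := hx
        intro k
        have hsplit : deltaA (l + 1) = uA l + aA ^ (l + 1) := by rw [uA]; abel
        have t1 : uA k * (uA l * y) * cA = aA * (uA k * (uA l * y)) := by
          calc uA k * (uA l * y) * cA = uA k * (uA l * y * cA) := by simp only [mul_assoc]
            _ = uA k * (aA * (uA l * y)) := by rw [ih l]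
            _ = uA k * aA * (uA l * y) := by rw [← mul_assoc]
            _ = aA * uA k * (uA l * y) := by rw [u_a_comm]
            _ = aA * (uA k * (uA l * y)) := by rw [mul_assoc]
        have t2 : uA k * (aA ^ (l + 1) * y) * cA = aA * (uA k * (aA ^ (l + 1) * y)) := by
          calc uA k * (aA ^ (l + 1) * y) * cA
              = uA k * aA ^ (l + 1) * y * cA := by rw [← mul_assoc]
            _ = aA ^ (l + 1) * uA k * y * cA := by rw [u_apow_comm]
            _ = aA ^ (l + 1) * (uA k * y * cA) := by simp only [mul_assoc]
            _ = aA ^ (l + 1) * (aA * (uA k * y)) := by rw [ih k]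
            _ = aA ^ (l + 1) * aA * (uA k * y) := by rw [← mul_assoc]
            _ = aA * aA ^ (l + 1) * (uA k * y) := by rw [apow_a_comm]
            _ = aA * (aA ^ (l + 1) * uA k * y) := by simp only [mul_assoc]
            _ = aA * (uA k * aA ^ (l + 1) * y) := by rw [u_apow_comm]
            _ = aA * (uA k * (aA ^ (l + 1) * y)) := by rw [mul_assoc]
        calc uA k * (deltaA (l + 1) * y) * cA
            = uA k * (uA l * y) * cA + uA k * (aA ^ (l + 1) * y) * cA := by
              rw [hsplit, add_mul, mul_add, add_mul]
          _ = aA * (uA k * (uA l * y)) + aA * (uA k * (aA ^ (l + 1) * y)) := by rw [t1, t2]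
          _ = aA * (uA k * (deltaA (l + 1) * y)) := by
              rw [hsplit, add_mul, mul_add, mul_add]
  intro z hz k
  have hz' : z ∈ Submodule.span ℚ (Submonoid.closure dgens : Set A0) := by
    have hz2 : z ∈ Subalgebra.toSubmodule Dalg := hz
    rwa [Dalg, Algebra.adjoin_eq_span] at hz2
  clear hz
  induction hz' using Submodule.span_induction with
  | mem x h => exact hmon x h k
  | zero => simp
  | add x y hx hy ihx ihy => rw [mul_add, add_mul, mul_add, ihx, ihy]
  | smul r x hx ih =>
      simp only [mul_smul_comm, smul_mul_assoc]
      rw [ih]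

/-- The left ideal-like span of the `u`'s over the δ-subalgebra. -/
def Uset : Submodule ℚ A0 :=
  Submodule.span ℚ {x | ∃ k : ℕ, ∃ z ∈ Dalg, x = uA k * z}

lemma c_comm_U : ∀ x ∈ Uset, cA * x = x * cA := by
  intro x hx
  induction hx using Submodule.span_induction with
  | mem x h =>
      obtain ⟨k, z, hz, rfl⟩ := h
      rw [← mul_assoc, c_u, q_lemma z hz k, mul_assoc]
  | zero => simp
  | add x y hx hy ihx ihy => rw [mul_add, add_mul, ihx, ihy]
  | smul r x hx ih =>
      simp only [mul_smul_comm, smul_mul_assoc]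
      rw [ih]

lemma U_mul_D : ∀ x ∈ Uset, ∀ d ∈ Dalg, x * d ∈ Uset := by
  intro x hx
  induction hx using Submodule.span_induction with
  | mem x h =>
      obtain ⟨k, z, hz, rfl⟩ := h
      intro d hd
      rw [mul_assoc]
      exact Submodule.subset_span ⟨k, z * d, mul_mem hz hd, rfl⟩
  | zero => intro d hd; rw [zero_mul]; exact Submodule.zero_mem _
  | add x y hx hy ihx ihy =>
      intro d hd; rw [add_mul]; exact Submodule.add_mem _ (ihx d hd) (ihy d hd)
  | smul r x hx ih =>
      intro d hd; rw [smul_mul_assoc]; exact Submodule.smul_mem _ _ (ih d hd)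

/-- `E m k = i c^m (a^k j)`. -/
def E (m k : ℕ) : A0 := iA * cA ^ m * (aA ^ k * jA)

lemma E_zero_k (k : ℕ) : E 0 k = deltaA (k + 1) := by
  rw [E, pow_zero, mul_one, ← c1]

lemma E_zero (m : ℕ) : E m 0 = iA * cA ^ m * jA := by
  rw [E, pow_zero, one_mul]

lemma c_akj (k : ℕ) : cA * (aA ^ k * jA) = aA ^ (k + 1) * jA - jA * deltaA (k + 1) := by
  have hb : bA * (aA ^ k * jA) = jA * deltaA (k + 1) := by
    rw [bA, c1, mul_assoc]
  rw [c_eq, sub_mul, hb, pow_succ']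
  simp only [mul_assoc]

lemma E_rec (m k : ℕ) : E (m + 1) k = E m (k + 1) - E m 0 * deltaA (k + 1) := by
  calc E (m + 1) k = iA * cA ^ m * (cA * (aA ^ k * jA)) := by
        rw [E, pow_succ]; simp only [mul_assoc]
    _ = iA * cA ^ m * (aA ^ (k + 1) * jA) - iA * cA ^ m * (jA * deltaA (k + 1)) := by
        rw [c_akj, mul_sub]
    _ = E m (k + 1) - E m 0 * deltaA (k + 1) := by
        rw [E_zero, E]; simp only [mul_assoc]

lemma E_mem_D (m : ℕ) : ∀ k, E m k ∈ Dalg := by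
  induction m with
  | zero => intro k; rw [E_zero_k]; exact delta_mem k
  | succ m ih =>
      intro k
      rw [E_rec]
      exact sub_mem (ih (k + 1)) (mul_mem (ih 0) (delta_mem k))

lemma E_mem_U (m : ℕ) : ∀ k, E (m + 1) k ∈ Uset := by
  induction m with
  | zero =>
      intro k
      have h : E 1 k = uA (k + 1) * 1 - uA k * aA := by
        rw [show (1 : ℕ) = 0 + 1 from rfl, E_rec, E_zero_k, E_zero_k, delta_one]
        have h1 : deltaA (k + 1 + 1) = uA (k + 1) + aA ^ (k + 1 + 1) := by rw [uA]; abel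
        have h2 : deltaA (k + 1) = uA k + aA ^ (k + 1) := by rw [uA]; abel
        rw [h1, h2, mul_one, mul_add, ← u_a_comm, ← pow_succ']
        abel
      rw [h]
      exact Submodule.sub_mem _
        (Submodule.subset_span ⟨k + 1, 1, one_mem _, rfl⟩)
        (Submodule.subset_span ⟨k, aA, a_mem, rfl⟩)
  | succ m ih =>
      intro k
      rw [E_rec]
      exact Submodule.sub_mem _ (ih (k + 1)) (U_mul_D _ (ih 0) _ (delta_mem k))

lemma RA_eq (s : ℕ) : RA (s + 2) = E (s + 1) 0 := by
  rw [E_zero]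
  rfl

end KronAux

/-- In `A₀`, the elements `R(s)` pairwise commute: `R(s) R(t) = R(t) R(s)`
for all `s, t ≥ 1`. -/
theorem regulars_commute (s t : ℕ) (hs : 1 ≤ s) (ht : 1 ≤ t) :
    RA s * RA t = RA t * RA s := by
  open KronAux in
  have hR1 : RA 1 = cA := rfl
  rcases Nat.exists_eq_add_of_le hs with ⟨s', rfl⟩
  rcases Nat.exists_eq_add_of_le ht with ⟨t', rfl⟩
  cases s' with
  | zero =>
      cases t' with
      | zero => rfl
      | succ t =>
          have h2 : 1 + (t + 1) = t + 2 := by omega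
          rw [h2, hR1, RA_eq]
          exact c_comm_U _ (E_mem_U t 0)
  | succ s =>
      cases t' with
      | zero =>
          have h2 : 1 + (s + 1) = s + 2 := by omega
          rw [h2, hR1, RA_eq]
          exact (c_comm_U _ (E_mem_U s 0)).symm
      | succ t =>
          have h2 : 1 + (s + 1) = s + 2 := by omega
          have h3 : 1 + (t + 1) = t + 2 := by omega
          rw [h2, h3, RA_eq, RA_eq]
          exact Dalg_comm _ (E_mem_D (s + 1) 0) _ (E_mem_D (t + 1) 0)
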